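/- arXiv:1212.5272 — 8 statements merged into one kernel-verified Lean document; each statement's English description precedes it below -/
import Mathlib

section
/- For any function ν : ℕ → ℝ there exist binary sequences s, t ∈ {0,1}^ℕ such that for every n ≥ 0 one has s ≠ σ^n(t) (so the least index at which s and σ^n(t) differ is finite), and such that for infinitely many n the least index m with s_m ≠ (σ^n(t))_m satisfies m > ν(n). -/
/-- The space of binary sequences `{0,1}^ℕ`. -/
abbrev BinSeq := ℕ → Fin 2

/-- The left-shift map `σ`. -/
def shift (s : BinSeq) : BinSeq := fun n => s (n + 1)

lemma shift_iterate (t : BinSeq) : ∀ n m, (shift^[n] t) m = t (m + n) := by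
  intro n
  induction n generalizing t with
  | zero => simp
  | succ n ih =>
    intro m
    rw [Function.iterate_succ_apply]
    rw [ih (shift t) m]
    show t (m + n + 1) = t (m + (n + 1))
    ring_nf

/-- For any function `ν : ℕ → ℝ` there exist binary sequences `s, t` such that `s ≠ σⁿ(t)`
for every `n ≥ 0` (so the least index where they differ is finite), and such that for
infinitely many `n`, the least index `m` with `s m ≠ (σⁿ t) m` satisfies `m > ν n`. -/
theorem stmt0 (ν : ℕ → ℝ) :
    ∃ s t : BinSeq,
      (∀ n : ℕ, s ≠ shift^[n] t) ∧
      {n : ℕ | ν n < ((sInf {m : ℕ | s m ≠ (shift^[n] t) m} : ℕ) : ℝ)}.Infinite := by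
  classical
  -- positions of 1's
  set a : ℕ → ℕ := fun k => Nat.rec 0 (fun _ ak => ak + 2 + ⌈ν (ak + 1)⌉₊) k with ha
  have ha_succ : ∀ k, a (k + 1) = a k + 2 + ⌈ν (a k + 1)⌉₊ := fun k => rfl
  have hmono : StrictMono a := by
    apply strictMono_nat_of_lt_succ
    intro k
    rw [ha_succ]
    omega
  set t : BinSeq := fun x => if ∃ j, a j = x then 1 else 0 with ht
  refine ⟨fun _ => 0, t, ?_, ?_⟩
  · -- s ≠ shift^[n] t
    intro n hEq
    have h1 : t (a n) = 1 := by rw [ht]; simp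
    have h2 : (shift^[n] t) (a n - n) = t (a n) := by
      rw [shift_iterate]
      congr 1
      have := hmono.le_apply (x := n)
      omega
    have := congrFun hEq (a n - n)
    rw [h2, h1] at this
    exact absurd this.symm one_ne_zero
  · -- infinitely many good n
    apply Set.infinite_of_injective_forall_mem (f := fun k => a k + 1)
    case hi =>
      intro i j hij
      simp only at hij
      have : a i = a j := by omega
      exact hmono.injective this
    case hf =>
      intro k
      simp only [Set.mem_setOf_eq]
      set n := a k + 1 with hn
      set S : Set ℕ := {m : ℕ | (fun _ => (0 : Fin 2)) m ≠ (shift^[n] t) m} with hS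
      have hmemS : ∀ m, m ∈ S ↔ (∃ j, a j = m + n) := by
        intro m
        simp only [hS, Set.mem_setOf_eq, shift_iterate, ht]
        by_cases h : ∃ j, a j = m + n <;> simp [h]
      -- lower bound: every element of S is ≥ 1 + ⌈ν n⌉₊
      have hlow : ∀ m ∈ S, ⌈ν n⌉₊ + 1 ≤ m := by
        intro m hm
        obtain ⟨j, hj⟩ := (hmemS m).1 hm
        have hgt : a k < a j := by omega
        have hjk : k + 1 ≤ j := by
          by_contra h
          push_neg at h
          have := hmono.le_iff_le.mpr (Nat.lt_succ_iff.mp h)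
          omega
        have h2 := hmono.le_iff_le.mpr hjk
        rw [ha_succ] at h2
        have hceil : ⌈ν n⌉₊ = ⌈ν (a k + 1)⌉₊ := rfl
        omega
      have hne : S.Nonempty := by
        refine ⟨a (k + 1) - n, (hmemS _).2 ⟨k + 1, ?_⟩⟩
        have := ha_succ k
        omega
      have hinf := Nat.sInf_mem hne
      have hbound := hlow _ hinf
      calc ν n ≤ (⌈ν n⌉₊ : ℝ) := Nat.le_ceil _
        _ < ((⌈ν n⌉₊ + 1 : ℕ) : ℝ) := by push_cast; linarith
        _ ≤ ((sInf S : ℕ) : ℝ) := by exact_mod_cast hbound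
end

section
/- For every s ∈ S, the following identity holds in the formal power series ring ℂ⟦Y⟧: (Σ_{n≥0} a_n^s Y^{2+4n})² = Y⁴ − Σ_{k≥0} a_k^{σ(s)} Y^{8+16k}. -/
noncomputable section

/-- `a : S → ℕ → ℂ` satisfies the recursion defining the coefficients `aₙˢ`:
`a₀ˢ = (−1)^{s₀}` and `a_{n+1}ˢ = −(1/(2a₀ˢ)) Σ_{i+j=n+1, i,j≥1} aᵢˢ aⱼˢ` if `4 ∤ n`,
with the extra term `−a_{n/4}^{σ(s)}/(2a₀ˢ)` if `4 ∣ n`. -/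
def IsCoeffFamily (a : BinSeq → ℕ → ℂ) : Prop :=
  (∀ s : BinSeq, a s 0 = (-1 : ℂ) ^ (s 0 : ℕ)) ∧
  (∀ (s : BinSeq) (n : ℕ), a s (n + 1) =
    if 4 ∣ n then
      -(a (shift s) (n / 4)) / (2 * a s 0)
        - (∑ i ∈ Finset.Ico 1 (n + 1), a s i * a s (n + 1 - i)) / (2 * a s 0)
    else
      -(∑ i ∈ Finset.Ico 1 (n + 1), a s i * a s (n + 1 - i)) / (2 * a s 0))

/-- The one-variable series `Σ_{n≥0} aₙˢ Y^(2+4n) ∈ ℂ⟦Y⟧`. -/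
def gSer (a : BinSeq → ℕ → ℂ) (s : BinSeq) : PowerSeries ℂ :=
  PowerSeries.mk fun k => if k % 4 = 2 then a s ((k - 2) / 4) else 0

/-- The one-variable series `Σ_{k≥0} a_k^{σ(s)} Y^(8+16k) ∈ ℂ⟦Y⟧`. -/
def hSer (a : BinSeq → ℕ → ℂ) (s : BinSeq) : PowerSeries ℂ :=
  PowerSeries.mk fun k => if k % 16 = 8 then a (shift s) ((k - 8) / 16) else 0

/-! With `A_s = Σ aₙˢ Xⁿ`, the recursion is exactly the coefficientwise form of
`A_s² = 1 - X · A_{σ s}(X⁴)`, the constant term being `a₀ˢ² = 1`. Since `gSer a s = Y² A_s(Y⁴)` and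
`hSer a s = Y⁸ A_{σ s}(Y¹⁶)`, substituting `X = Y⁴` and multiplying by `Y⁴` gives the identity. -/

open PowerSeries

theorem PowerSeries.mk_ite_mod_eq_X_pow_mul_expand {R : Type*} [CommRing R] (f : ℕ → R)
    {m r : ℕ} (hm : m ≠ 0) (hr : r < m) :
    mk (fun k => if k % m = r then f ((k - r) / m) else 0) = X ^ r * expand m hm (mk f) := by
  ext k
  rw [coeff_mk, coeff_X_pow_mul', coeff_expand, coeff_mk]
  by_cases hk : r ≤ k
  · have hmod : k % m = r ↔ m ∣ k - r := by
      rw [← Nat.modEq_iff_dvd' hk, Nat.ModEq, Nat.mod_eq_of_lt hr, eq_comm]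
    simp only [hmod, if_pos hk]
  · have hmod : k % m ≠ r := fun h => hk (h ▸ Nat.mod_le k m)
    simp only [hmod, hk, if_false]

theorem Finset.Nat.sum_antidiagonal_succ_mul_self {R : Type*} [CommSemiring R] (f : ℕ → R)
    (n : ℕ) :
    ∑ p ∈ antidiagonal (n + 1), f p.1 * f p.2 =
      2 * f 0 * f (n + 1) + ∑ i ∈ Ico 1 (n + 1), f i * f (n + 1 - i) := by
  rw [sum_antidiagonal_eq_sum_range_succ_mk, sum_range_succ, range_eq_Ico,
    sum_eq_sum_Ico_succ_bot (Nat.succ_pos n)]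
  simp only [Nat.sub_self, Nat.sub_zero]
  ring

namespace IsCoeffFamily

variable {a : BinSeq → ℕ → ℂ} (s : BinSeq)

theorem head_mul_self (ha : IsCoeffFamily a) : a s 0 * a s 0 = 1 := by
  rw [ha.1 s, ← pow_add, ← two_mul, pow_mul, neg_one_sq, one_pow]

theorem two_mul_head_mul_succ_add_sum (ha : IsCoeffFamily a) (n : ℕ) :
    2 * a s 0 * a s (n + 1) + ∑ i ∈ Finset.Ico 1 (n + 1), a s i * a s (n + 1 - i) =
      -(if 4 ∣ n then a (shift s) (n / 4) else 0) := by
  have ha0 : a s 0 ≠ 0 := left_ne_zero_of_mul_eq_one (ha.head_mul_self s)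
  rw [ha.2 s n]
  split_ifs <;> field_simp <;> ring

theorem mk_sq (ha : IsCoeffFamily a) :
    mk (a s) ^ 2 = 1 - X * expand 4 four_ne_zero (mk (a (shift s))) := by
  ext (_ | n)
  · simp [sq, ha.head_mul_self s]
  · rw [sq, coeff_mul, map_sub, coeff_succ_X_mul, coeff_expand, coeff_one]
    simp only [coeff_mk]
    rw [Finset.Nat.sum_antidiagonal_succ_mul_self, ha.two_mul_head_mul_succ_add_sum s n,
      if_neg n.succ_ne_zero, zero_sub]

end IsCoeffFamily

theorem gSer_eq (a : BinSeq → ℕ → ℂ) (s : BinSeq) :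
    gSer a s = X ^ 2 * expand 4 four_ne_zero (mk (a s)) :=
  mk_ite_mod_eq_X_pow_mul_expand _ _ (by norm_num)

theorem hSer_eq (a : BinSeq → ℕ → ℂ) (s : BinSeq) :
    hSer a s = X ^ 8 * expand 16 (by norm_num) (mk (a (shift s))) :=
  mk_ite_mod_eq_X_pow_mul_expand _ _ (by norm_num)

/-- For every `s ∈ S`, in `ℂ⟦Y⟧` one has
`(Σ_{n≥0} aₙˢ Y^(2+4n))² = Y⁴ − Σ_{k≥0} a_k^{σ(s)} Y^(8+16k)`. -/
theorem stmt1 (a : BinSeq → ℕ → ℂ) (ha : IsCoeffFamily a) (s : BinSeq) :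
    (gSer a s) ^ 2 = (PowerSeries.X : PowerSeries ℂ) ^ 4 - hSer a s := by
  rw [gSer_eq, hSer_eq, mul_pow, ← map_pow, ha.mk_sq, map_sub, map_one, map_mul, expand_X,
    ← expand_mul 4 four_ne_zero 4 four_ne_zero]
  ring
end
end

section
/- Let s, t ∈ S be distinct binary sequences and let m be the least index with s_m ≠ t_m. Then the least integer n with a_n^s ≠ a_n^t is exactly (4^m − 1)/3. -/
noncomputable section

/-!
Once the coefficients of `s` and `t` agree up to `n`, the convolution sums and the factors
`1/(2a₀)` in the recursion for `a_{n+1}` coincide, so `a_{n+1}ˢ = a_{n+1}ᵗ` exactly when `4 ∤ n`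
or `a_{n/4}^{σ s} = a_{n/4}^{σ t}`. As `σ` lowers the first disagreement of `s` and `t` by one,
induction on it along `(4^(m+1) − 1)/3 = 4 · (4^m − 1)/3 + 1` puts the first disagreement of the
coefficients at `(4^m − 1)/3`.
-/

def repunit4 : ℕ → ℕ
  | 0 => 0
  | m + 1 => 4 * repunit4 m + 1

lemma three_mul_repunit4_add_one (m : ℕ) : 3 * repunit4 m + 1 = 4 ^ m := by
  induction m with
  | zero => rfl
  | succ m ih => rw [pow_succ, ← ih, repunit4]; ring

lemma sum_Ico_mul_sub_congr {R : Type*} [AddCommMonoid R] [Mul R] {f g : ℕ → R} {n : ℕ}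
    (h : ∀ i ≤ n, f i = g i) :
    ∑ i ∈ Finset.Ico 1 (n + 1), f i * f (n + 1 - i) =
      ∑ i ∈ Finset.Ico 1 (n + 1), g i * g (n + 1 - i) := by
  refine Finset.sum_congr rfl fun i hi => ?_
  rw [Finset.mem_Ico] at hi
  rw [h i (by omega), h (n + 1 - i) (by omega)]

namespace IsCoeffFamily

variable {a : BinSeq → ℕ → ℂ} (ha : IsCoeffFamily a)
include ha

lemma apply_zero_eq_iff {s t : BinSeq} : a s 0 = a t 0 ↔ s 0 = t 0 := by
  rw [ha.1, ha.1]
  generalize s 0 = x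
  generalize t 0 = y
  fin_cases x <;> fin_cases y <;> norm_num

lemma apply_zero_ne_zero (s : BinSeq) : a s 0 ≠ 0 := by
  rw [ha.1]
  exact pow_ne_zero _ (by norm_num)

lemma apply_succ_eq_iff {s t : BinSeq} {n : ℕ} (h : ∀ i ≤ n, a s i = a t i) :
    a s (n + 1) = a t (n + 1) ↔ (4 ∣ n → a (shift s) (n / 4) = a (shift t) (n / 4)) := by
  have h0 : a s 0 = a t 0 := h 0 n.zero_le
  have hc : 2 * a t 0 ≠ 0 := mul_ne_zero two_ne_zero (ha.apply_zero_ne_zero t)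
  rw [ha.2 s n, ha.2 t n, sum_Ico_mul_sub_congr h, h0]
  split_ifs with h4
  · rw [sub_left_inj, div_left_inj' hc, neg_inj]
    exact ⟨fun h => fun _ => h, fun h => h h4⟩
  · exact ⟨fun _ h => absurd h h4, fun _ => rfl⟩

lemma apply_eq_of_lt_repunit4 {m : ℕ} :
    ∀ {s t : BinSeq}, (∀ k < m, s k = t k) → ∀ n < repunit4 m, a s n = a t n := by
  induction m with
  | zero => intro s t _ n hn; exact absurd hn (Nat.not_lt_zero n)
  | succ m ih =>
    intro s t hst n
    have hshift : ∀ n < repunit4 m, a (shift s) n = a (shift t) n :=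
      ih fun k hk => hst (k + 1) (by omega)
    induction n using Nat.strong_induction_on with
    | _ n ihn =>
      intro hn
      rw [repunit4] at hn
      cases n with
      | zero => exact ha.apply_zero_eq_iff.2 (hst 0 m.succ_pos)
      | succ n =>
        refine (ha.apply_succ_eq_iff fun i hi => ihn i (by omega) (by rw [repunit4]; omega)).2 ?_
        exact fun _ => hshift _ (by omega)

lemma apply_repunit4_ne {m : ℕ} :
    ∀ {s t : BinSeq}, (∀ k < m, s k = t k) → s m ≠ t m →
      a s (repunit4 m) ≠ a t (repunit4 m) := by
  induction m with
  | zero => intro s t _ hne; exact mt ha.apply_zero_eq_iff.1 hne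
  | succ m ih =>
    intro s t hst hne
    have hagree : ∀ i ≤ 4 * repunit4 m, a s i = a t i := fun i hi =>
      ha.apply_eq_of_lt_repunit4 hst i (by rw [repunit4]; omega)
    rw [repunit4, Ne, ha.apply_succ_eq_iff hagree, Nat.mul_div_cancel_left _ (by norm_num)]
    exact fun h => ih (fun k hk => hst (k + 1) (by omega)) hne (h (dvd_mul_right 4 _))

lemma isLeast_ne_repunit4 {s t : BinSeq} {m : ℕ} (hm : IsLeast {k | s k ≠ t k} m) :
    IsLeast {n | a s n ≠ a t n} (repunit4 m) := by
  have hbefore : ∀ k < m, s k = t k := fun k hk => not_not.1 fun h => (hm.2 h).not_gt hk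
  refine ⟨ha.apply_repunit4_ne hbefore hm.1, fun n hn => not_lt.1 fun hlt => ?_⟩
  exact hn (ha.apply_eq_of_lt_repunit4 hbefore n hlt)

end IsCoeffFamily

/-- If `s ≠ t` and `m` is the least index with `s m ≠ t m`, then the least `n` with
`aₙˢ ≠ aₙᵗ` exists and is exactly `(4^m − 1)/3`. -/
theorem stmt3 (a : BinSeq → ℕ → ℂ) (ha : IsCoeffFamily a) (s t : BinSeq) (hst : s ≠ t) :
    {n : ℕ | a s n ≠ a t n}.Nonempty ∧
    sInf {n : ℕ | a s n ≠ a t n} = (4 ^ sInf {m : ℕ | s m ≠ t m} - 1) / 3 := by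
  have hdiff : {m : ℕ | s m ≠ t m}.Nonempty := Function.ne_iff.1 hst
  have hleast := ha.isLeast_ne_repunit4 (isLeast_csInf hdiff)
  refine ⟨⟨_, hleast.1⟩, ?_⟩
  rw [hleast.csInf_eq, ← three_mul_repunit4_add_one]
  omega
end
end

section
/- Let s, t ∈ S be distinct binary sequences and let m be the least index with s_m ≠ t_m. Then the order of vanishing (the least degree with nonzero coefficient) of the formal power series g_s − g_t ∈ ℂ⟦Y⟧ is exactly (4^{m+1} + 2)/3. -/
noncomputable section

/-- `nIdx m = (4^m - 1)/3`. -/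
def nIdx : ℕ → ℕ
  | 0 => 0
  | m + 1 => 4 * nIdx m + 1

lemma nIdx_succ (m : ℕ) : nIdx (m + 1) = 4 * nIdx m + 1 := rfl

lemma nIdx_spec (m : ℕ) : 3 * nIdx m + 1 = 4 ^ m := by
  induction m with
  | zero => simp [nIdx]
  | succ m ih => rw [nIdx_succ, pow_succ]; omega

lemma a_zero_ne (a : BinSeq → ℕ → ℂ) (ha : IsCoeffFamily a) (s : BinSeq) : a s 0 ≠ 0 := by
  rw [ha.1 s]
  exact pow_ne_zero _ (by norm_num)

lemma key (a : BinSeq → ℕ → ℂ) (ha : IsCoeffFamily a) :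
    ∀ m : ℕ, ∀ s t : BinSeq, (∀ i, i < m → s i = t i) →
      (∀ n, n < nIdx m → a s n = a t n) ∧
      (s m ≠ t m → a s (nIdx m) ≠ a t (nIdx m)) := by
  intro m
  induction m with
  | zero =>
    intro s t _
    refine ⟨fun n hn => by simp [nIdx] at hn, fun hne => ?_⟩
    rw [nIdx, ha.1 s, ha.1 t]
    have hs : (s 0 : ℕ) < 2 := (s 0).isLt
    have ht : (t 0 : ℕ) < 2 := (t 0).isLt
    have hval : (s 0 : ℕ) ≠ (t 0 : ℕ) := fun h => hne (Fin.ext h)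
    interval_cases hsv : (s 0 : ℕ) <;> interval_cases htv : (t 0 : ℕ) <;>
      simp_all <;> norm_num
  | succ m ih =>
    intro s t hag
    have hsh : ∀ i, i < m → shift s i = shift t i := fun i hi => hag (i + 1) (by omega)
    have IH := ih (shift s) (shift t) hsh
    have h0 : a s 0 = a t 0 := by rw [ha.1 s, ha.1 t, hag 0 (by omega)]
    have h0ne : a s 0 ≠ 0 := a_zero_ne a ha s
    have h2ne : (2 : ℂ) * a s 0 ≠ 0 := by
      exact mul_ne_zero two_ne_zero h0ne
    -- equality for all n ≤ 4 * nIdx m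
    have heq : ∀ n, n ≤ 4 * nIdx m → a s n = a t n := by
      intro n
      induction n using Nat.strong_induction_on with
      | _ n sih =>
        intro hn
        match n with
        | 0 => exact h0
        | k + 1 =>
          have hsum : (∑ i ∈ Finset.Ico 1 (k + 1), a s i * a s (k + 1 - i)) =
              ∑ i ∈ Finset.Ico 1 (k + 1), a t i * a t (k + 1 - i) := by
            refine Finset.sum_congr rfl fun i hi => ?_
            simp only [Finset.mem_Ico] at hi
            rw [sih i (by omega) (by omega), sih (k + 1 - i) (by omega) (by omega)]
          rw [ha.2 s k, ha.2 t k, h0, hsum]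
          by_cases hd : 4 ∣ k
          · rw [if_pos hd, if_pos hd]
            have hk4 : k / 4 < nIdx m := by omega
            rw [IH.1 (k / 4) hk4]
          · rw [if_neg hd, if_neg hd]
    refine ⟨fun n hn => heq n (by rw [nIdx_succ] at hn; omega), fun hne => ?_⟩
    have hshne : shift s m ≠ shift t m := hne
    have hA : a (shift s) (nIdx m) ≠ a (shift t) (nIdx m) := IH.2 hshne
    rw [nIdx_succ]
    set n := 4 * nIdx m with hn
    have hd : 4 ∣ n := ⟨nIdx m, by omega⟩
    have hsum : (∑ i ∈ Finset.Ico 1 (n + 1), a s i * a s (n + 1 - i)) =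
        ∑ i ∈ Finset.Ico 1 (n + 1), a t i * a t (n + 1 - i) := by
      refine Finset.sum_congr rfl fun i hi => ?_
      simp only [Finset.mem_Ico] at hi
      rw [heq i (by omega), heq (n + 1 - i) (by omega)]
    rw [ha.2 s n, ha.2 t n, if_pos hd, if_pos hd, h0, hsum]
    have hn4 : n / 4 = nIdx m := by omega
    rw [hn4]
    intro hcon
    apply hA
    have h2ne' : (2 : ℂ) * a t 0 ≠ 0 := by rw [← h0]; exact h2ne
    have h3 : -(a (shift s) (nIdx m)) / (2 * a t 0) = -(a (shift t) (nIdx m)) / (2 * a t 0) := by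
      linear_combination hcon
    rw [div_eq_div_iff h2ne' h2ne'] at h3
    exact neg_injective (mul_right_cancel₀ h2ne' h3)

/-- If `s ≠ t` and `m` is the least index with `s m ≠ t m`, then the order of vanishing of
`g_s − g_t ∈ ℂ⟦Y⟧` is exactly `(4^(m+1) + 2)/3`. -/
theorem stmt4 (a : BinSeq → ℕ → ℂ) (ha : IsCoeffFamily a) (s t : BinSeq) (hst : s ≠ t) :
    (gSer a s - gSer a t).order =
      (((4 ^ (sInf {m : ℕ | s m ≠ t m} + 1) + 2) / 3 : ℕ) : ℕ∞) := by
  have hne : {m : ℕ | s m ≠ t m}.Nonempty := by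
    rcases Function.ne_iff.mp hst with ⟨m, hm⟩
    exact ⟨m, hm⟩
  set M := sInf {m : ℕ | s m ≠ t m} with hM
  have hMmem : s M ≠ t M := Nat.sInf_mem hne
  have hag : ∀ i, i < M → s i = t i := fun i hi => by
    by_contra h
    have := Nat.sInf_le (show i ∈ {m : ℕ | s m ≠ t m} from h)
    omega
  have hk := key a ha M s t hag
  have harith : (4 ^ (M + 1) + 2) / 3 = 4 * nIdx M + 2 := by
    have h1 := nIdx_spec M
    rw [pow_succ]
    omega
  rw [harith]
  rw [PowerSeries.order_eq_nat]
  constructor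
  · simp only [map_sub, gSer, PowerSeries.coeff_mk]
    have hmod : (4 * nIdx M + 2) % 4 = 2 := by omega
    rw [if_pos hmod, if_pos hmod]
    have hdiv : (4 * nIdx M + 2 - 2) / 4 = nIdx M := by omega
    rw [hdiv]
    exact sub_ne_zero_of_ne (hk.2 hMmem)
  · intro i hi
    simp only [map_sub, gSer, PowerSeries.coeff_mk]
    by_cases hm : i % 4 = 2
    · rw [if_pos hm, if_pos hm]
      rw [hk.1 _ (by omega)]
      ring
    · rw [if_neg hm, if_neg hm, sub_zero]
end
end

section
/- Let g, h ∈ ℂ⟦Y⟧ be formal power series with zero constant term and g ≠ h, and regard them as elements G, H of the two-variable formal power series ring ℂ⟦X,Y⟧ depending only on Y. Then the quotient ring ℂ⟦X,Y⟧/(X + G, X + H) by the ideal generated by X + G and X + H is a finite-dimensional ℂ-vector space, and its dimension equals the order of vanishing of g − h (the least degree with nonzero coefficient of g − h). -/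
/-!
Write `A = ℂ⟦Y⟧`, so that `ℂ⟦X,Y⟧ = A⟦X⟧` and the ideal becomes `(X + g, X + h)`. Since `g` lies
in the maximal ideal of the complete local ring `A`, the polynomial `X + g` is distinguished of
degree one, and Weierstrass division gives `A⟦X⟧/(X + g) ≅ A` by `X ↦ -g`. This sends `X + h` to
`h - g`, so the quotient is `A/(g - h) = A/(Y ^ n)` with `n = ord(g - h)`, and the classes of
`1, Y, …, Y ^ (n - 1)` form a basis.
-/

noncomputable section

/-- A one-variable power series `g ∈ ℂ⟦Y⟧` regarded as an element of the two-variable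
power series ring `ℂ⟦X,Y⟧` depending only on `Y` (variable `0` is `X`, variable `1` is `Y`). -/
def toTwoVars (g : PowerSeries ℂ) : MvPowerSeries (Fin 2) ℂ :=
  fun d => if d 0 = 0 then PowerSeries.coeff (d 1) g else 0

open PowerSeries

theorem Polynomial.isDistinguishedAt_X_add_C {A : Type*} [CommRing A] {I : Ideal A} {a : A}
    (ha : a ∈ I) : (X + C a).IsDistinguishedAt I where
  mem {n} hn := by
    obtain rfl := Nat.lt_one_iff.1 (hn.trans_le (natDegree_add_C.trans_le natDegree_X_le))
    simpa using ha
  monic := monic_X_add_C a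

namespace PowerSeries

section Evaluation

variable {A : Type*} [CommRing A] {I : Ideal A} [IsAdicComplete I A] {a : A}

def quotientSpanXAddCAlgEquiv (ha : a ∈ I) :
    (A⟦X⟧ ⧸ Ideal.span {X + C a}) ≃ₐ[A] A :=
  (Ideal.quotientEquivAlgOfEq A (by simp)).trans <|
    (Polynomial.isDistinguishedAt_X_add_C ha).algEquivQuotient.symm.trans <|
      (Ideal.quotientEquivAlgOfEq A (by simp [sub_eq_add_neg])).trans
        (Polynomial.quotientSpanXSubCAlgEquiv (-a))

theorem quotientSpanXAddCAlgEquiv_mk_X_add_C (ha : a ∈ I) (b : A) :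
    quotientSpanXAddCAlgEquiv ha (Ideal.Quotient.mk _ (X + C b)) = b - a := by
  have hX : Ideal.Quotient.mk (Ideal.span {X + C a}) X = algebraMap A _ (-a) := by
    rw [map_neg, eq_neg_iff_add_eq_zero, ← Ideal.Quotient.mk_algebraMap, ← map_add,
      Ideal.Quotient.eq_zero_iff_mem]
    exact Ideal.subset_span rfl
  have hC : Ideal.Quotient.mk (Ideal.span {X + C a}) (C b) = algebraMap A _ b :=
    Ideal.Quotient.mk_algebraMap _ _ _
  rw [map_add, hX, hC, ← map_add, AlgEquiv.commutes, Algebra.algebraMap_self_apply,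
    neg_add_eq_sub]

def quotientSpanPairXAddCAlgEquiv (ha : a ∈ I) (b : A) :
    (A⟦X⟧ ⧸ Ideal.span {X + C a, X + C b}) ≃ₐ[A] A ⧸ Ideal.span {a - b} :=
  (Ideal.quotientEquivAlgOfEq A (Ideal.span_insert _ _)).trans <|
    (DoubleQuot.quotQuotEquivQuotSupₐ A _ _).symm.trans <|
      Ideal.quotientEquivAlg _ _ (quotientSpanXAddCAlgEquiv ha) <| by
        rw [Ideal.map_span, Ideal.map_span, Set.image_singleton, Set.image_singleton,
          ← neg_sub, Ideal.span_singleton_neg]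
        congr 2
        exact (quotientSpanXAddCAlgEquiv_mk_X_add_C ha b).symm

/- Scalars are restricted while `A` is still abstract: for `A = k⟦X⟧`, instance search would
find `algebraPowerSeries : Algebra k⟦X⟧ k⟦X⟧⟦X⟧`, which acts coefficientwise rather than through
`C`. -/
def quotientSpanPairXAddCLinearEquiv (R : Type*) [CommRing R] [Algebra R A]
    (ha : a ∈ I) (b : A) :
    (A⟦X⟧ ⧸ Ideal.span {X + C a, X + C b}) ≃ₗ[R] A ⧸ Ideal.span {a - b} :=
  ((quotientSpanPairXAddCAlgEquiv ha b).restrictScalars R).toLinearEquiv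

end Evaluation

section Truncation

variable (R : Type*) [CommRing R] (n : ℕ)

theorem ker_pi_coeff_eq_span_X_pow :
    LinearMap.ker (LinearMap.pi fun i : Fin n ↦ coeff (R := R) i) =
      (Ideal.span {X ^ n} : Ideal R⟦X⟧).restrictScalars R := by
  ext f
  simp [Ideal.mem_span_singleton, X_pow_dvd_iff, funext_iff, Fin.forall_iff]

theorem pi_coeff_surjective :
    Function.Surjective (LinearMap.pi fun i : Fin n ↦ coeff (R := R) i) := fun c ↦
  ⟨mk fun i ↦ if h : i < n then c ⟨i, h⟩ else 0, funext fun i ↦ by simp⟩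

def quotientSpanXPowLinearEquiv :
    (R⟦X⟧ ⧸ Ideal.span {(X : R⟦X⟧) ^ n}) ≃ₗ[R] (Fin n → R) :=
  (Submodule.Quotient.restrictScalarsEquiv R _).symm.trans <|
    (Submodule.quotEquivOfEq _ _ (ker_pi_coeff_eq_span_X_pow R n).symm).trans <|
      LinearMap.quotKerEquivOfSurjective _ (pi_coeff_surjective R n)

end Truncation

theorem span_singleton_eq_span_X_pow_order {k : Type*} [Field k] {f : k⟦X⟧} (hf : f ≠ 0) :
    Ideal.span {f} = Ideal.span {X ^ f.order.toNat} := by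
  conv_lhs => rw [← X_pow_order_mul_divXPowOrder (f := f)]
  exact Ideal.span_singleton_mul_right_unit (isUnit_divided_by_X_pow_order hf) _

def quotientSpanPairXAddCEquivFun {k : Type*} [Field k] {a b : k⟦X⟧}
    (ha : constantCoeff a = 0) (hab : a ≠ b) :
    (k⟦X⟧⟦X⟧ ⧸ Ideal.span {X + C a, X + C b}) ≃ₗ[k] (Fin (a - b).order.toNat → k) :=
  have ha' : a ∈ Ideal.span {X} := by rwa [Ideal.mem_span_singleton, X_dvd_iff]
  quotientSpanPairXAddCLinearEquiv k ha' b ≪≫ₗ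
    (Ideal.quotientEquivAlgOfEq k
      (span_singleton_eq_span_X_pow_order (sub_ne_zero.2 hab))).toLinearEquiv ≪≫ₗ
    quotientSpanXPowLinearEquiv k _

end PowerSeries

def finTwoEquivOptionUnit : Fin 2 ≃ Option Unit :=
  (finSuccEquiv 1).trans (Equiv.optionCongr (Equiv.equivPUnit (Fin 1)))

namespace MvPowerSeries

def finTwoAlgEquiv (R : Type*) [CommRing R] :
    MvPowerSeries (Fin 2) R ≃ₐ[R] R⟦X⟧⟦X⟧ :=
  (renameEquiv R finTwoEquivOptionUnit).trans (optionEquivLeft Unit R)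

theorem finTwoAlgEquiv_X_zero (R : Type*) [CommRing R] :
    finTwoAlgEquiv R (X 0) = PowerSeries.X := by
  simp [finTwoAlgEquiv, finTwoEquivOptionUnit, rename_X]

theorem finTwoAlgEquiv_toTwoVars (g : ℂ⟦X⟧) :
    finTwoAlgEquiv ℂ (toTwoVars g) = PowerSeries.C g := by
  ext n m
  have hd : (Finsupp.single () m).optionElim n =
      Finsupp.embDomain finTwoEquivOptionUnit.toEmbedding
        (Finsupp.single 0 n + Finsupp.single 1 m) := by
    rw [Finsupp.embDomain_add, Finsupp.embDomain_single, Finsupp.embDomain_single,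
      show finTwoEquivOptionUnit.toEmbedding 0 = none from rfl,
      show finTwoEquivOptionUnit.toEmbedding 1 = some () from rfl]
    ext (_ | _) <;> simp
  rw [PowerSeries.coeff_def (s := Finsupp.single () m) (by simp), finTwoAlgEquiv,
    AlgEquiv.trans_apply, coeff_coeff_optionEquivLeft, hd]
  refine (coeff_embDomain_rename _ (toTwoVars g) _).trans ?_
  rw [← PowerSeries.coeff_def (n := m) (by simp), PowerSeries.coeff_C,
    apply_ite (PowerSeries.coeff m), map_zero]
  simp [toTwoVars, coeff_apply]

end MvPowerSeries

theorem stmt5_general (g h : PowerSeries ℂ)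
    (hg : PowerSeries.constantCoeff g = 0)
    (hgh : g ≠ h) :
    FiniteDimensional ℂ
      (MvPowerSeries (Fin 2) ℂ ⧸
        Ideal.span {MvPowerSeries.X 0 + toTwoVars g, MvPowerSeries.X 0 + toTwoVars h}) ∧
    ((Module.finrank ℂ
      (MvPowerSeries (Fin 2) ℂ ⧸
        Ideal.span {MvPowerSeries.X 0 + toTwoVars g, MvPowerSeries.X 0 + toTwoVars h}) : ℕ∞)
      = (g - h).order) := by
  have hspan : Ideal.span {X + C g, X + C h} =
      (Ideal.span {MvPowerSeries.X 0 + toTwoVars g, MvPowerSeries.X 0 + toTwoVars h}).map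
        (MvPowerSeries.finTwoAlgEquiv ℂ) := by
    simp [Ideal.map_span, Set.image_pair, MvPowerSeries.finTwoAlgEquiv_X_zero,
      MvPowerSeries.finTwoAlgEquiv_toTwoVars]
  let E := (Ideal.quotientEquivAlg _ _ (MvPowerSeries.finTwoAlgEquiv ℂ) hspan).toLinearEquiv ≪≫ₗ
    quotientSpanPairXAddCEquivFun hg hgh
  refine ⟨E.symm.finiteDimensional, ?_⟩
  rw [E.finrank_eq, Module.finrank_fin_fun,
    ENat.natCast_toNat (order_eq_top.not.2 (sub_ne_zero.2 hgh))]

/-- Let `g, h ∈ ℂ⟦Y⟧` have zero constant term and `g ≠ h`, and regard them as elements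
`G, H ∈ ℂ⟦X,Y⟧` depending only on `Y`.  Then `ℂ⟦X,Y⟧/(X + G, X + H)` is a
finite-dimensional `ℂ`-vector space whose dimension equals the order of vanishing of
`g − h`. -/
theorem stmt5 (g h : PowerSeries ℂ)
    (hg : PowerSeries.constantCoeff g = 0) (hh : PowerSeries.constantCoeff h = 0)
    (hgh : g ≠ h) :
    FiniteDimensional ℂ
      (MvPowerSeries (Fin 2) ℂ ⧸
        Ideal.span {MvPowerSeries.X 0 + toTwoVars g, MvPowerSeries.X 0 + toTwoVars h}) ∧
    ((Module.finrank ℂ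
      (MvPowerSeries (Fin 2) ℂ ⧸
        Ideal.span {MvPowerSeries.X 0 + toTwoVars g, MvPowerSeries.X 0 + toTwoVars h}) : ℕ∞)
      = (g - h).order) :=
  stmt5_general g h hg hgh
end
end

section
/- For every integer n ≥ 1, Σ_{k=1}^{n} 1/(k²(n−k+1)²) ≤ 20/(n+1)². -/
lemma sumsq_le (n : ℕ) (hn : 1 ≤ n) :
    ∑ k ∈ Finset.Icc 1 n, (1 : ℝ) / (k : ℝ) ^ 2 ≤ 2 - 1 / n := by
  induction n with
  | zero => omega
  | succ m ih =>
    rcases Nat.eq_or_lt_of_le hn with h | h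
    · simp [← h]; norm_num
    · have hm : 1 ≤ m := by omega
      rw [Finset.sum_Icc_succ_top (by omega)]
      have hm' : (0:ℝ) < m := by exact_mod_cast hm
      have hm1 : (0:ℝ) < (m:ℝ) + 1 := by linarith
      have key : (1:ℝ) / ((m:ℝ)+1)^2 ≤ 1/m - 1/((m:ℝ)+1) := by
        rw [div_sub_div _ _ (ne_of_gt hm') (ne_of_gt hm1), div_le_div_iff₀ (by positivity) (by positivity)]
        nlinarith
      have := ih hm
      push_cast
      linarith

lemma reflect_sum (n : ℕ) :
    ∑ k ∈ Finset.Icc 1 n, (1 : ℝ) / ((n : ℝ) - (k : ℝ) + 1) ^ 2 =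
      ∑ k ∈ Finset.Icc 1 n, (1 : ℝ) / (k : ℝ) ^ 2 := by
  apply Finset.sum_nbij' (fun k => n + 1 - k) (fun k => n + 1 - k)
  · intro a ha; simp only [Finset.mem_Icc] at *; omega
  · intro a ha; simp only [Finset.mem_Icc] at *; omega
  · intro a ha; simp only [Finset.mem_Icc] at ha; omega
  · intro a ha; simp only [Finset.mem_Icc] at ha; omega
  · intro a ha
    simp only [Finset.mem_Icc] at ha
    congr 2
    have h1 : (↑(n + 1 - a) : ℝ) = (n:ℝ) + 1 - a := by
      have : a ≤ n + 1 := by omega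
      push_cast [Nat.cast_sub this]
      ring
    rw [h1]; ring

lemma key_ineq (a b : ℝ) (ha : 1 ≤ a) (hb : 1 ≤ b) :
    1 / (a ^ 2 * b ^ 2) ≤ 2 / (a + b) ^ 2 * (1 / a ^ 2 + 1 / b ^ 2) := by
  have ha' : (0:ℝ) < a := by linarith
  have hb' : (0:ℝ) < b := by linarith
  have h : 2/(a+b)^2 * (1/a^2 + 1/b^2) - 1/(a^2*b^2) = (a-b)^2/((a+b)^2*(a^2*b^2)) := by
    field_simp
    ring
  nlinarith [sq_nonneg (a-b), div_nonneg (sq_nonneg (a-b)) (le_of_lt (by positivity : (0:ℝ) < (a+b)^2*(a^2*b^2)))]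

/-- For every integer `n ≥ 1`, `Σ_{k=1}^{n} 1/(k²(n−k+1)²) ≤ 20/(n+1)²`. -/
theorem stmt7 (n : ℕ) (hn : 1 ≤ n) :
    ∑ k ∈ Finset.Icc 1 n, (1 : ℝ) / ((k : ℝ) ^ 2 * ((n : ℝ) - (k : ℝ) + 1) ^ 2) ≤
      20 / ((n : ℝ) + 1) ^ 2 := by
  have hn1 : (0:ℝ) < (n:ℝ) + 1 := by positivity
  have step1 : ∑ k ∈ Finset.Icc 1 n, (1 : ℝ) / ((k : ℝ) ^ 2 * ((n : ℝ) - (k : ℝ) + 1) ^ 2)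
      ≤ ∑ k ∈ Finset.Icc 1 n, 2 / ((n:ℝ)+1) ^ 2 * (1 / (k:ℝ)^2 + 1 / ((n:ℝ) - k + 1)^2) := by
    apply Finset.sum_le_sum
    intro k hk
    simp only [Finset.mem_Icc] at hk
    have ha : (1:ℝ) ≤ (k:ℝ) := by exact_mod_cast hk.1
    have hb : (1:ℝ) ≤ (n:ℝ) - k + 1 := by
      have : (k:ℝ) ≤ n := by exact_mod_cast hk.2
      linarith
    have := key_ineq (k:ℝ) ((n:ℝ) - k + 1) ha hb
    have hab : (k:ℝ) + ((n:ℝ) - k + 1) = (n:ℝ) + 1 := by ring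
    rwa [hab] at this
  have step2 : ∑ k ∈ Finset.Icc 1 n, 2 / ((n:ℝ)+1) ^ 2 * (1 / (k:ℝ)^2 + 1 / ((n:ℝ) - k + 1)^2)
      = 2 / ((n:ℝ)+1)^2 * (2 * ∑ k ∈ Finset.Icc 1 n, (1:ℝ) / (k:ℝ)^2) := by
    rw [← Finset.mul_sum, Finset.sum_add_distrib, reflect_sum]
    ring
  have hs := sumsq_le n hn
  have hnpos : (0:ℝ) < n := by exact_mod_cast hn
  have hs2 : ∑ k ∈ Finset.Icc 1 n, (1:ℝ) / (k:ℝ)^2 ≤ 2 := by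
    have : (0:ℝ) < 1 / n := by positivity
    linarith
  calc ∑ k ∈ Finset.Icc 1 n, (1 : ℝ) / ((k : ℝ) ^ 2 * ((n : ℝ) - (k : ℝ) + 1) ^ 2)
      ≤ 2 / ((n:ℝ)+1)^2 * (2 * ∑ k ∈ Finset.Icc 1 n, (1:ℝ) / (k:ℝ)^2) := by
        rw [← step2]; exact step1
    _ ≤ 2 / ((n:ℝ)+1)^2 * (2 * 2) := by
        apply mul_le_mul_of_nonneg_left (by linarith) (by positivity)
    _ ≤ 20 / ((n:ℝ)+1)^2 := by
        rw [div_mul_eq_mul_div]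
        apply div_le_div_of_nonneg_right (by norm_num) (by positivity)
end

section
/- For every binary sequence s ∈ S and every integer n ≥ 1, the coefficient a_n^s satisfies |a_n^s| ≤ (1/20)·10^n/n². -/
noncomputable section

/-!
Strong induction on `n`, uniformly in `s`. Since `‖a₀ˢ‖ = 1`, the recursion
gives `‖a_{n+1}ˢ‖ ≤ ‖a_{n/4}^{σ s}‖ / 2 + ‖Σ aᵢˢ a_{n+1-i}ˢ‖ / 2`, the first term only
when `4 ∣ n`. For `bₙ = 10ⁿ / (20 n²)` the convolution satisfies `Σ bᵢ b_{n-i} ≤ (2/5) bₙ`,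
because `1 / (i² j²) ≤ 2 / (i + j)² · (1 / i² + 1 / j²)` and `Σ 1 / i² ≤ 2`; and `b` is
increasing on `n ≥ 1`, so the shifted term is at most `b_{n+1}`. Hence
`‖a_{n+1}ˢ‖ ≤ b_{n+1} / 2 + b_{n+1} / 5`.
-/

open Finset

def coeffBound (n : ℕ) : ℝ := 1 / 20 * 10 ^ n / (n : ℝ) ^ 2

lemma coeffBound_nonneg (n : ℕ) : 0 ≤ coeffBound n := by
  unfold coeffBound
  positivity

lemma coeffBound_one : coeffBound 1 = 1 / 2 := by
  norm_num [coeffBound]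

lemma coeffBound_le_succ {n : ℕ} (hn : 1 ≤ n) : coeffBound n ≤ coeffBound (n + 1) := by
  have hn' : (1 : ℝ) ≤ n := by exact_mod_cast hn
  unfold coeffBound
  rw [div_le_div_iff₀ (by positivity) (by positivity)]
  push_cast
  rw [pow_succ (10 : ℝ) n]
  have h : ((n : ℝ) + 1) ^ 2 ≤ 10 * (n : ℝ) ^ 2 := by nlinarith
  have h10 : (0 : ℝ) ≤ 1 / 20 * 10 ^ n := by positivity
  nlinarith [mul_le_mul_of_nonneg_left h h10]

lemma coeffBound_monotoneOn : MonotoneOn coeffBound {n | 1 ≤ n} :=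
  monotoneOn_nat_Ici_of_le_succ fun _ hn => coeffBound_le_succ hn

lemma inv_sq_mul_inv_sq_le {x y : ℝ} (hx : 0 < x) (hy : 0 < y) :
    (x ^ 2)⁻¹ * (y ^ 2)⁻¹ ≤ 2 / (x + y) ^ 2 * ((x ^ 2)⁻¹ + (y ^ 2)⁻¹) := by
  have h : (x + y) ^ 2 ≤ 2 * (x ^ 2 + y ^ 2) := by nlinarith [sq_nonneg (x - y)]
  rw [inv_add_inv (by positivity) (by positivity), div_mul_div_comm, ← mul_inv,
    le_div_iff₀ (by positivity), inv_mul_eq_div, div_le_iff₀ (by positivity)]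
  exact mul_le_mul_of_nonneg_right h (by positivity)

lemma sum_inv_sq_mul_inv_sq_sub_le (m : ℕ) :
    ∑ i ∈ Ico 1 m, ((i : ℝ) ^ 2)⁻¹ * (((m - i : ℕ) : ℝ) ^ 2)⁻¹ ≤ 8 / (m : ℝ) ^ 2 := by
  have hsum : ∑ i ∈ Ico 1 m, ((i : ℝ) ^ 2)⁻¹ ≤ 2 := by
    simpa [← Ico_add_one_left_eq_Ioo] using sum_Ioo_inv_sq_le (α := ℝ) 0 m
  have hreflect :
      ∑ i ∈ Ico 1 m, (((m - i : ℕ) : ℝ) ^ 2)⁻¹ = ∑ i ∈ Ico 1 m, ((i : ℝ) ^ 2)⁻¹ := by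
    rw [sum_Ico_reflect (fun j => ((j : ℝ) ^ 2)⁻¹) 1 m.le_succ]
    simp
  calc _ ≤ ∑ i ∈ Ico 1 m,
          2 / (m : ℝ) ^ 2 * (((i : ℝ) ^ 2)⁻¹ + (((m - i : ℕ) : ℝ) ^ 2)⁻¹) := by
        gcongr ∑ i ∈ _, ?_ with i hi
        rw [mem_Ico] at hi
        have hm : (m : ℝ) = i + (m - i : ℕ) := by
          rw [Nat.cast_sub hi.2.le]
          ring
        rw [hm]
        exact inv_sq_mul_inv_sq_le (by exact_mod_cast hi.1) (by simp [hi.2])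
    _ = 2 / (m : ℝ) ^ 2 *
          (∑ i ∈ Ico 1 m, ((i : ℝ) ^ 2)⁻¹ + ∑ i ∈ Ico 1 m, ((i : ℝ) ^ 2)⁻¹) := by
        rw [← mul_sum, sum_add_distrib, hreflect]
    _ ≤ 2 / (m : ℝ) ^ 2 * (2 + 2) := by gcongr
    _ = 8 / (m : ℝ) ^ 2 := by ring

lemma sum_coeffBound_mul_le (m : ℕ) :
    ∑ i ∈ Ico 1 m, coeffBound i * coeffBound (m - i) ≤ 2 / 5 * coeffBound m := by
  have hterm : ∀ i ∈ Ico 1 m, coeffBound i * coeffBound (m - i)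
      = 10 ^ m / 400 * (((i : ℝ) ^ 2)⁻¹ * (((m - i : ℕ) : ℝ) ^ 2)⁻¹) := by
    intro i hi
    rw [mem_Ico] at hi
    rw [coeffBound, coeffBound, ← Nat.add_sub_cancel' hi.2.le, pow_add,
      Nat.add_sub_cancel_left]
    ring
  rw [sum_congr rfl hterm, ← mul_sum]
  calc _ ≤ 10 ^ m / 400 * (8 / (m : ℝ) ^ 2) := by gcongr; exact sum_inv_sq_mul_inv_sq_sub_le m
    _ = 2 / 5 * coeffBound m := by unfold coeffBound; ring

lemma norm_sum_mul_le_coeffBound {R : Type*} [NonUnitalSeminormedRing R] {f : ℕ → R} {m : ℕ}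
    (hf : ∀ i, 1 ≤ i → i < m → ‖f i‖ ≤ coeffBound i) :
    ‖∑ i ∈ Ico 1 m, f i * f (m - i)‖ ≤ 2 / 5 * coeffBound m :=
  calc _ ≤ ∑ i ∈ Ico 1 m, ‖f i‖ * ‖f (m - i)‖ :=
        (norm_sum_le _ _).trans (sum_le_sum fun _ _ => norm_mul_le _ _)
    _ ≤ ∑ i ∈ Ico 1 m, coeffBound i * coeffBound (m - i) := by
        gcongr with i hi
        · exact coeffBound_nonneg i
        · exact hf i (mem_Ico.1 hi).1 (mem_Ico.1 hi).2
        · rw [mem_Ico] at hi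
          exact hf (m - i) (by omega) (by omega)
    _ ≤ 2 / 5 * coeffBound m := sum_coeffBound_mul_le m

namespace IsCoeffFamily

variable {a : BinSeq → ℕ → ℂ}

lemma norm_apply_zero (ha : IsCoeffFamily a) (s : BinSeq) : ‖a s 0‖ = 1 := by
  rw [ha.1 s]
  simp

lemma norm_succ_le (ha : IsCoeffFamily a) (s : BinSeq) (n : ℕ) :
    ‖a s (n + 1)‖ ≤ (if 4 ∣ n then ‖a (shift s) (n / 4)‖ else 0) / 2
      + ‖∑ i ∈ Ico 1 (n + 1), a s i * a s (n + 1 - i)‖ / 2 := by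
  have h2 : ‖2 * a s 0‖ = 2 := by
    rw [norm_mul, ha.norm_apply_zero]
    norm_num
  rw [ha.2 s n]
  split_ifs
  · refine (norm_sub_le _ _).trans_eq ?_
    rw [norm_div, norm_div, norm_neg, h2]
  · rw [norm_div, norm_neg, h2, zero_div, zero_add]

end IsCoeffFamily

/-- For every `s ∈ S` and `n ≥ 1`, `|aₙˢ| ≤ (1/20)·10ⁿ/n²`. -/
theorem stmt8 (a : BinSeq → ℕ → ℂ) (ha : IsCoeffFamily a) (s : BinSeq) (n : ℕ)
    (hn : 1 ≤ n) :
    ‖a s n‖ ≤ (1 / 20) * 10 ^ n / (n : ℝ) ^ 2 := by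
  induction n using Nat.strong_induction_on generalizing s with
  | _ n IH =>
  obtain ⟨m, rfl⟩ := Nat.exists_eq_add_of_le' hn
  have hstep := ha.norm_succ_le s m
  rcases m.eq_zero_or_pos with rfl | hm
  · show ‖a s 1‖ ≤ coeffBound 1
    simpa [ha.norm_apply_zero, coeffBound_one] using hstep
  have hshift : (if 4 ∣ m then ‖a (shift s) (m / 4)‖ else 0) ≤ coeffBound (m + 1) := by
    split_ifs with h4
    · obtain ⟨k, rfl⟩ := h4
      have hk : 1 ≤ k := by omega
      calc ‖a (shift s) (4 * k / 4)‖ = ‖a (shift s) k‖ := by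
            rw [Nat.mul_div_cancel_left k four_pos]
        _ ≤ coeffBound k := IH k (by omega) _ hk
        _ ≤ coeffBound (4 * k + 1) := coeffBound_monotoneOn hk (by simp) (by omega)
    · exact coeffBound_nonneg _
  have hconv := norm_sum_mul_le_coeffBound (f := a s) (m := m + 1)
    fun i hi1 hi2 => IH i hi2 s hi1
  change _ ≤ coeffBound (m + 1)
  linarith [coeffBound_nonneg (m + 1)]
end
end

section
/- Let R be a commutative ring, F : R → R a ring homomorphism, and let I and J be ideals of R. Suppose r, s ≥ 1 are integers with J^r ⊆ I and J^s ⊆ J·F, where J·F denotes the ideal of R generated by the image F(J) (the pushforward/map of J along F). Then for every n ≥ 0 one has J^{s^n · r} ⊆ I·F^n, where F^n is the n-fold composition of F and I·F^n is the ideal generated by F^n(I). -/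
/-- Let `R` be a commutative ring, `F : R → R` a ring homomorphism, and `I, J` ideals of
`R`.  If `r, s ≥ 1` are integers with `J^r ≤ I` and `J^s ⊆ J·F` (the ideal generated by
the image `F(J)`), then for every `n ≥ 0` one has `J^(sⁿ·r) ⊆ I·Fⁿ`, where `Fⁿ` is the
`n`-fold composition of `F` and `I·Fⁿ` is the ideal generated by `Fⁿ(I)`. -/
theorem stmt12 (R : Type*) [CommRing R] (F : R →+* R) (I J : Ideal R)
    (r s : ℕ) (hr : 1 ≤ r) (hs : 1 ≤ s)
    (hJr : J ^ r ≤ I) (hJs : J ^ s ≤ Ideal.map F J) :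
    ∀ n : ℕ, J ^ (s ^ n * r) ≤ Ideal.map (F ^ n) I := by
  intro n
  induction n with
  | zero =>
    simpa [RingHom.one_def, Ideal.map_id] using hJr
  | succ n ih =>
    have h1 : J ^ (s ^ (n + 1) * r) = (J ^ s) ^ (s ^ n * r) := by
      rw [← pow_mul, pow_succ']
      ring_nf
    rw [h1]
    calc (J ^ s) ^ (s ^ n * r) ≤ (Ideal.map F J) ^ (s ^ n * r) :=
          Ideal.pow_right_mono hJs _
      _ = Ideal.map F (J ^ (s ^ n * r)) := (Ideal.map_pow F J _).symm
      _ ≤ Ideal.map F (Ideal.map (F ^ n) I) := Ideal.map_mono ih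
      _ = Ideal.map (F ^ (n + 1)) I := by
          rw [Ideal.map_map, pow_succ']; rfl
end
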